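/- arXiv:1908.04403 — 3 statements merged into one kernel-verified Lean document; each statement's English description precedes it below -/
import Mathlib

section
/- Suppose f : [0,1] → ℝ is continuous and admits a jointly continuous local time η, i.e. η : [0,1] × ℝ → [0,∞) is continuous, for each t the occupation measure of f on [0,t] has density η(t,·) with respect to Lebesgue measure, and η(t,y) vanishes for |y| large. Then 2·∫₀¹ [η(1, f(t)) − η(t, f(t))] dt = ∫_ℝ η(1, y)² dy. -/
/-!
Write `L t = ∫ η(t, y)² dy`. Since `η(b, ·)² - η(a, ·)² = (η(a, ·) + η(b, ·)) (η(b, ·) - η(a, ·))`,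
the occupation formula for `φ = η(a, ·) + η(b, ·)` gives the exact identity
`L b - L a = ∫_a^b (η(a, f u) + η(b, f u)) du`. Joint continuity of `η` then yields
`L' t = 2 η(t, f t)`, hence `L 1 = L 1 - L 0 = 2 ∫₀¹ η(t, f t) dt`, while `∫₀¹ η(1, f t) dt = L 1`
is the occupation formula for `φ = η(1, ·)`.
-/

open Set MeasureTheory intervalIntegral

theorem hasCompactSupport_of_forall_le_abs {g : ℝ → ℝ} {C : ℝ} (h : ∀ y, C ≤ |y| → g y = 0) :
    HasCompactSupport g :=
  HasCompactSupport.intro (isCompact_closedBall 0 C) fun y hy =>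
    h y (not_le.1 (by simpa using hy)).le

theorem ContinuousOn.continuous_of_prod_univ {X Y Z : Type*} [TopologicalSpace X]
    [TopologicalSpace Y] [TopologicalSpace Z] {g : X → Y → Z} {s : Set X}
    (hg : ContinuousOn (fun p : X × Y => g p.1 p.2) (s ×ˢ univ)) {x : X} (hx : x ∈ s) :
    Continuous (g x) :=
  hg.comp_continuous (continuous_const.prodMk continuous_id) fun y => ⟨hx, mem_univ y⟩

theorem hasDerivWithinAt_of_sub_eq_intervalIntegral {F : ℝ → ℝ} {k : ℝ → ℝ → ℝ} {s : Set ℝ}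
    {t : ℝ} (hs : s.OrdConnected) (ht : t ∈ s)
    (hk : ContinuousWithinAt (Function.uncurry k) (s ×ˢ s) (t, t))
    (hk_int : ∀ b ∈ s, IntervalIntegrable (k b) volume t b)
    (hF : ∀ b ∈ s, F b - F t = ∫ u in t..b, k b u) :
    HasDerivWithinAt F (k t t) s t := by
  refine hasDerivWithinAt_iff_isLittleO.2 (Asymptotics.isLittleO_iff.2 fun c hc => ?_)
  obtain ⟨δ, hδ, hkδ⟩ := Metric.continuousWithinAt_iff.1 hk c hc
  filter_upwards [inter_mem_nhdsWithin s (Metric.ball_mem_nhds t hδ)] with b ⟨hb, hbt⟩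
  have hsub : ∫ u in t..b, (k b u - k t t) = F b - F t - (b - t) • k t t := by
    rw [integral_sub (hk_int b hb) intervalIntegrable_const, intervalIntegral.integral_const,
      hF b hb]
  rw [← hsub, Real.norm_eq_abs (b - t)]
  refine norm_integral_le_of_norm_le_const fun u hu => ?_
  have hu : u ∈ uIcc t b := uIoc_subset_uIcc hu
  have hut : dist u t < δ :=
    (abs_sub_left_of_mem_uIcc hu).trans_lt (by simpa [Real.dist_eq] using hbt)
  exact (hkδ (x := (b, u)) ⟨hb, hs.uIcc_subset ht hb hu⟩
    (by simpa [Prod.dist_eq] using ⟨hbt, hut⟩)).le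

theorem integral_eq_sub_of_hasDerivWithinAt_Icc {F F' : ℝ → ℝ} {a b : ℝ} (hab : a ≤ b)
    (hF : ∀ x ∈ Icc a b, HasDerivWithinAt F (F' x) (Icc a b) x)
    (hF' : IntervalIntegrable F' volume a b) :
    ∫ x in a..b, F' x = F b - F a :=
  integral_eq_sub_of_hasDerivAt_of_le hab (fun x hx => (hF x hx).continuousWithinAt)
    (fun x hx => (hF x (Ioo_subset_Icc_self hx)).hasDerivAt (Icc_mem_nhds hx.1 hx.2)) hF'

def IsOccupationDensity (f : ℝ → ℝ) (η : ℝ → ℝ → ℝ) : Prop :=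
  ∀ φ : BoundedContinuousFunction ℝ ℝ, ∀ t ∈ Icc (0:ℝ) 1,
    ∫ u in (0:ℝ)..t, φ (f u) = ∫ y : ℝ, φ y * η t y

namespace IsOccupationDensity

variable {f : ℝ → ℝ} {η : ℝ → ℝ → ℝ} {φ : ℝ → ℝ} {a b t : ℝ}

theorem intervalIntegral_comp_of_hasCompactSupport (h : IsOccupationDensity f η) (hφ : Continuous φ)
    (hφ_supp : HasCompactSupport φ) (ht : t ∈ Icc 0 1) :
    ∫ u in (0:ℝ)..t, φ (f u) = ∫ y, φ y * η t y := by
  obtain ⟨M, hM⟩ := hφ_supp.exists_bound_of_continuous hφ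
  exact h (.ofNormedAddCommGroup φ hφ M hM) t ht

theorem intervalIntegral_comp_eq_sub (h : IsOccupationDensity f η)
    (hf : ContinuousOn f (Icc 0 1)) (hφ : Continuous φ) (hφ_supp : HasCompactSupport φ)
    (ha : a ∈ Icc 0 1) (hb : b ∈ Icc 0 1) :
    ∫ u in a..b, φ (f u) = (∫ y, φ y * η b y) - ∫ y, φ y * η a y := by
  have hint : ∀ t ∈ Icc (0:ℝ) 1, IntervalIntegrable (fun u => φ (f u)) volume 0 t :=
    fun t ht => (hφ.comp_continuousOn
      (hf.mono (uIcc_subset_Icc (left_mem_Icc.2 zero_le_one) ht))).intervalIntegrable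
  rw [← integral_interval_sub_left (hint b hb) (hint a ha),
    h.intervalIntegral_comp_of_hasCompactSupport hφ hφ_supp hb,
    h.intervalIntegral_comp_of_hasCompactSupport hφ hφ_supp ha]

theorem integral_sq_sub_integral_sq (h : IsOccupationDensity f η)
    (hf : ContinuousOn f (Icc 0 1)) (ha_cont : Continuous (η a))
    (ha_supp : HasCompactSupport (η a)) (hb_cont : Continuous (η b))
    (hb_supp : HasCompactSupport (η b)) (ha : a ∈ Icc 0 1) (hb : b ∈ Icc 0 1) :
    (∫ y, η b y ^ 2) - ∫ y, η a y ^ 2 = ∫ u in a..b, (η a (f u) + η b (f u)) := by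
  have hsum :=
    h.intervalIntegral_comp_eq_sub hf (ha_cont.add hb_cont) (ha_supp.add hb_supp) ha hb
  have hint {g g' : ℝ → ℝ} (hg : Continuous g) (hg' : Continuous g')
      (hg'_supp : HasCompactSupport g') : Integrable fun y => g y * g' y :=
    (hg.mul hg').integrable_of_hasCompactSupport hg'_supp.mul_left
  have hab_cont : Continuous fun y => η a y + η b y := ha_cont.add hb_cont
  simp only [Pi.add_apply] at hsum
  simp only [sq]
  rw [hsum, ← integral_sub (hint hb_cont hb_cont hb_supp) (hint ha_cont ha_cont ha_supp),
    ← integral_sub (hint hab_cont hb_cont hb_supp) (hint hab_cont ha_cont ha_supp)]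
  congr 1 with y
  ring

theorem hasDerivWithinAt_integral_sq (h : IsOccupationDensity f η)
    (hf : ContinuousOn f (Icc 0 1))
    (hη : ContinuousOn (fun p : ℝ × ℝ => η p.1 p.2) (Icc 0 1 ×ˢ univ))
    (hη_supp : ∀ s ∈ Icc (0:ℝ) 1, HasCompactSupport (η s)) (ht : t ∈ Icc 0 1) :
    HasDerivWithinAt (fun s => ∫ y, η s y ^ 2) (2 * η t (f t)) (Icc 0 1) t := by
  have hg : ContinuousOn (fun p : ℝ × ℝ => η p.1 (f p.2)) (Icc 0 1 ×ˢ Icc 0 1) :=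
    hη.comp (continuousOn_fst.prodMk (hf.comp continuousOn_snd fun p hp => hp.2))
      fun p hp => ⟨hp.1, mem_univ _⟩
  have hk : ContinuousOn (fun p : ℝ × ℝ => η t (f p.2) + η p.1 (f p.2)) (Icc 0 1 ×ˢ Icc 0 1) :=
    (hg.comp (continuousOn_const.prodMk continuousOn_snd) fun p hp => ⟨ht, hp.2⟩).add hg
  rw [two_mul]
  refine hasDerivWithinAt_of_sub_eq_intervalIntegral (k := fun b u => η t (f u) + η b (f u))
    ordConnected_Icc ht (hk _ ⟨ht, ht⟩) (fun b hb => ?_) (fun b hb => ?_)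
  · exact ((hk.comp (continuousOn_const.prodMk continuousOn_id) fun u hu => ⟨hb, hu⟩).mono
      (uIcc_subset_Icc ht hb)).intervalIntegrable
  · exact h.integral_sq_sub_integral_sq hf (hη.continuous_of_prod_univ ht) (hη_supp t ht)
      (hη.continuous_of_prod_univ hb) (hη_supp b hb) ht hb

end IsOccupationDensity

theorem occupation_density_square_identity_general (f : ℝ → ℝ) (η : ℝ → ℝ → ℝ)
    (hf : ContinuousOn f (Icc 0 1))
    (hη : ContinuousOn (fun p : ℝ × ℝ => η p.1 p.2) (Icc 0 1 ×ˢ univ))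
    (hocc : ∀ φ : BoundedContinuousFunction ℝ ℝ, ∀ t ∈ Icc (0:ℝ) 1,
      ∫ u in (0:ℝ)..t, φ (f u) = ∫ y : ℝ, φ y * η t y)
    (hsupp : ∃ C : ℝ, ∀ t ∈ Icc (0:ℝ) 1, ∀ y : ℝ, C ≤ |y| → η t y = 0) :
    2 * ∫ t in (0:ℝ)..1, (η 1 (f t) - η t (f t)) = ∫ y : ℝ, (η 1 y) ^ 2 := by
  obtain ⟨C, hC⟩ := hsupp
  have hocc' : IsOccupationDensity f η := hocc
  have hη_supp (t : ℝ) (ht : t ∈ Icc (0:ℝ) 1) : HasCompactSupport (η t) :=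
    hasCompactSupport_of_forall_le_abs (hC t ht)
  have h0 : (0:ℝ) ∈ Icc (0:ℝ) 1 := left_mem_Icc.2 zero_le_one
  have h1 : (1:ℝ) ∈ Icc (0:ℝ) 1 := right_mem_Icc.2 zero_le_one
  have hη_cont (t : ℝ) (ht : t ∈ Icc (0:ℝ) 1) : Continuous (η t) := hη.continuous_of_prod_univ ht
  have hη0 : ∫ y, η 0 y ^ 2 = 0 := by
    simpa [sq] using
      (hocc'.intervalIntegral_comp_of_hasCompactSupport (hη_cont 0 h0) (hη_supp 0 h0) h0).symm
  have hη1 : ∫ t in (0:ℝ)..1, η 1 (f t) = ∫ y, η 1 y ^ 2 := by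
    simpa [sq] using
      hocc'.intervalIntegral_comp_of_hasCompactSupport (hη_cont 1 h1) (hη_supp 1 h1) h1
  have hdiag : ContinuousOn (fun t => η t (f t)) (Icc 0 1) :=
    hη.comp (continuousOn_id.prodMk hf) fun t ht => ⟨ht, mem_univ _⟩
  have hftc : ∫ t in (0:ℝ)..1, 2 * η t (f t) = (∫ y, η 1 y ^ 2) - ∫ y, η 0 y ^ 2 :=
    integral_eq_sub_of_hasDerivWithinAt_Icc zero_le_one
      (fun t ht => hocc'.hasDerivWithinAt_integral_sq hf hη hη_supp ht)
      ((continuousOn_const.mul hdiag).intervalIntegrable_of_Icc zero_le_one)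
  have hη1_comp : ContinuousOn (fun t => η 1 (f t)) (Icc 0 1) :=
    (hη_cont 1 h1).comp_continuousOn hf
  rw [intervalIntegral.integral_const_mul, hη0, sub_zero] at hftc
  rw [intervalIntegral.integral_sub (hη1_comp.intervalIntegrable_of_Icc zero_le_one)
    (hdiag.intervalIntegrable_of_Icc zero_le_one), hη1]
  linarith

/-- If `f` is continuous on `[0,1]` with a jointly continuous local time `η`
(occupation density) vanishing for `|y|` large, then
`2·∫₀¹ (η(1, f(t)) − η(t, f(t))) dt = ∫_ℝ η(1,y)² dy`. -/
theorem occupation_density_square_identity (f : ℝ → ℝ) (η : ℝ → ℝ → ℝ)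
    (hf : ContinuousOn f (Icc 0 1))
    (hη : ContinuousOn (fun p : ℝ × ℝ => η p.1 p.2) (Icc 0 1 ×ˢ univ))
    (hηnonneg : ∀ t ∈ Icc (0:ℝ) 1, ∀ y : ℝ, 0 ≤ η t y)
    (hocc : ∀ φ : BoundedContinuousFunction ℝ ℝ, ∀ t ∈ Icc (0:ℝ) 1,
      ∫ u in (0:ℝ)..t, φ (f u) = ∫ y : ℝ, φ y * η t y)
    (hsupp : ∃ C : ℝ, ∀ t ∈ Icc (0:ℝ) 1, ∀ y : ℝ, C ≤ |y| → η t y = 0) :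
    2 * ∫ t in (0:ℝ)..1, (η 1 (f t) - η t (f t)) = ∫ y : ℝ, (η 1 y) ^ 2 :=
  occupation_density_square_identity_general f η hf hη hocc hsupp
end

section
/- Let f : {0,1,…,2n} → ℤ≥0 satisfy f(0) = f(2n) = 0 and |f(i+1) − f(i)| = 1 for all 0 ≤ i ≤ 2n−1. For k ≥ 0 let U_k := #{0 ≤ j ≤ 2n−1 : f(j) = k and f(j+1) = k+1} (the number of up-steps from level k). Then for every k ≥ 1, #{0 ≤ j ≤ 2n : f(j) = k} = U_k + U_{k−1}. -/
/-- For a ±1-step path `f` from `0` to `0` of length `2n` and any level `k ≥ 1`, the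
number of visits to level `k` equals the number of up-steps from `k` plus the number
of up-steps from `k-1`. -/
theorem visits_eq_upsteps (n : ℕ) (hn : 1 ≤ n) (f : ℕ → ℕ)
    (h0 : f 0 = 0) (h2n : f (2 * n) = 0)
    (hstep : ∀ i < 2 * n, f (i + 1) = f i + 1 ∨ f (i + 1) + 1 = f i)
    (k : ℕ) (hk : 1 ≤ k) :
    ((Finset.range (2 * n + 1)).filter (fun j => f j = k)).card =
      ((Finset.range (2 * n)).filter (fun j => f j = k ∧ f (j + 1) = k + 1)).card +
      ((Finset.range (2 * n)).filter (fun j => f j = k - 1 ∧ f (j + 1) = k)).card := by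
  classical
  -- D: down-steps from k, U: up-steps from k-1
  set D := (Finset.range (2 * n)).filter (fun j => f j = k ∧ f (j + 1) = k - 1) with hD
  set U := (Finset.range (2 * n)).filter (fun j => f j = k - 1 ∧ f (j + 1) = k) with hU
  -- Step 1: visits = up-steps from k + down-steps from k
  have h1 : ((Finset.range (2 * n + 1)).filter (fun j => f j = k)).card =
      ((Finset.range (2 * n)).filter (fun j => f j = k ∧ f (j + 1) = k + 1)).card + D.card := by
    have hfk : ¬ (f (2 * n) = k) := by omega
    have hrange : (Finset.range (2 * n + 1)).filter (fun j => f j = k) =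
        (Finset.range (2 * n)).filter (fun j => f j = k) := by
      rw [Finset.range_add_one, Finset.filter_insert, if_neg hfk]
    rw [hrange]
    have hsplit := Finset.card_filter_add_card_filter_not
      (s := (Finset.range (2 * n)).filter (fun j => f j = k))
      (p := fun j => f (j + 1) = k + 1)
    rw [Finset.filter_filter, Finset.filter_filter] at hsplit
    have e1 : (Finset.range (2 * n)).filter (fun j => f j = k ∧ f (j + 1) = k + 1) =
        (Finset.range (2 * n)).filter (fun a => f a = k ∧ f (a + 1) = k + 1) := rfl
    have e2 : D = (Finset.range (2 * n)).filter (fun a => f a = k ∧ ¬ f (a + 1) = k + 1) := by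
      rw [hD]
      apply Finset.filter_congr
      intro j hj
      rw [Finset.mem_range] at hj
      have := hstep j hj
      constructor <;> intro h <;> omega
    rw [e1, e2, hsplit]
  rw [h1]
  -- Step 2: D.card = U.card via telescoping
  have h2 : (D.card : ℤ) = U.card := by
    have key : ∀ j ∈ Finset.range (2 * n),
        ((if f j = k - 1 ∧ f (j + 1) = k then (1 : ℤ) else 0) -
          (if f j = k ∧ f (j + 1) = k - 1 then 1 else 0)) =
        ((if k ≤ f (j + 1) then (1 : ℤ) else 0) - (if k ≤ f j then 1 else 0)) := by
      intro j hj
      rw [Finset.mem_range] at hj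
      rcases hstep j hj with h | h <;> split_ifs <;> omega
    have hsum : ∑ j ∈ Finset.range (2 * n),
        ((if f j = k - 1 ∧ f (j + 1) = k then (1 : ℤ) else 0) -
          (if f j = k ∧ f (j + 1) = k - 1 then 1 else 0)) = 0 := by
      rw [Finset.sum_congr rfl key,
        Finset.sum_range_sub (fun j => if k ≤ f j then (1 : ℤ) else 0)]
      have h1' : ¬ k ≤ f 0 := by omega
      have h2' : ¬ k ≤ f (2 * n) := by omega
      rw [if_neg h1', if_neg h2']; ring
    rw [Finset.sum_sub_distrib, sub_eq_zero] at hsum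
    rw [Finset.sum_boole, Finset.sum_boole] at hsum
    rw [hD, hU]
    exact hsum.symm
  have : D.card = U.card := by exact_mod_cast h2
  omega
end

section
/- Let (a_ℓ)_{ℓ≥1} be a finitely supported family of nonnegative reals, A := Σ_ℓ a_ℓ, and M := max_ℓ a_ℓ. For s ≥ 1 let W_s := Σ a_{ℓ₁}·a_{ℓ₂}⋯a_{ℓ_s}, where the sum runs over tuples (ℓ₁,…,ℓ_s) with ℓ_{k+1} ≥ ℓ_k + 2 for all 1 ≤ k ≤ s−1. Then 0 ≤ A^s − s!·W_s ≤ 3·s²·M·A^{s−1}. -/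
/-!
Expanding `A ^ s = (∑ ℓ, a ℓ) ^ s` gives the total weight `∏ k, a (ℓ k)` of all `s`-tuples.
A tuple whose entries are pairwise at distance at least `2` is injective, and sorting it is an
`s!`-to-one map onto the increasing tuples with consecutive gaps at least `2`, which are the
tuples summed in `W`; so `A ^ s - s! * W` is the weight of the remaining tuples, which is
nonnegative. Each of them has a pair of positions `i ≠ j` with `|ℓ i - ℓ j| ≤ 1`; once `i`, `j`
and the other entries are fixed, at most three values of `ℓ j` qualify, so the weight of such
tuples is at most `3 * M * A ^ (s - 1)` for each of the `s ^ 2` pairs `(i, j)`.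
-/

open Finset Function

def IsTwoSeparated {ι : Type*} (ℓ : ι → ℕ) : Prop :=
  Pairwise fun i j => ℓ i + 2 ≤ ℓ j ∨ ℓ j + 2 ≤ ℓ i

namespace IsTwoSeparated

variable {ι : Type*} {ℓ : ι → ℕ}

instance [Fintype ι] [DecidableEq ι] : DecidablePred (IsTwoSeparated (ι := ι)) := fun ℓ =>
  inferInstanceAs (Decidable (∀ i j, i ≠ j → ℓ i + 2 ≤ ℓ j ∨ ℓ j + 2 ≤ ℓ i))

theorem injective (h : IsTwoSeparated ℓ) : Injective ℓ := by
  intro i j hij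
  by_contra hne
  rcases h hne with h | h <;> omega

theorem comp_equiv_iff {κ : Type*} (e : κ ≃ ι) : IsTwoSeparated (ℓ ∘ e) ↔ IsTwoSeparated ℓ :=
  EquivLike.pairwise_comp_iff e fun i j => ℓ i + 2 ≤ ℓ j ∨ ℓ j + 2 ≤ ℓ i

theorem not_iff : ¬IsTwoSeparated ℓ ↔ ∃ i j, i ≠ j ∧ ℓ j < ℓ i + 2 ∧ ℓ i < ℓ j + 2 := by
  simp only [IsTwoSeparated, Pairwise, not_forall, not_or, not_le, exists_prop]

end IsTwoSeparated

theorem consecutive_add_two_le_iff_isTwoSeparated_and_strictMono {s : ℕ} (ℓ : Fin s → ℕ) :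
    (∀ k (h : k + 1 < s), ℓ ⟨k, Nat.lt_of_succ_lt h⟩ + 2 ≤ ℓ ⟨k + 1, h⟩) ↔
      IsTwoSeparated ℓ ∧ StrictMono ℓ := by
  have : Trans (fun x y : ℕ => x + 2 ≤ y) (fun x y => x + 2 ≤ y) (fun x y => x + 2 ≤ y) :=
    ⟨fun hxy hyz => by omega⟩
  rw [← List.isChain_ofFn (r := fun x y => x + 2 ≤ y), List.isChain_iff_pairwise,
    List.pairwise_ofFn]
  refine ⟨fun h => ⟨fun i j hij => ?_, fun i j hij => by have := h hij; omega⟩,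
    fun h i j hij => ?_⟩
  · rcases hij.lt_or_gt with hlt | hlt
    · exact .inl (h hlt)
    · exact .inr (h hlt)
  · have := h.2 hij
    have := h.1 hij.ne
    omega

section

variable {κ β : Type*} [LinearOrder κ] [Fintype κ] [AddCommMonoid β] {s : ℕ}
  {Q : (Fin s → κ) → Prop} [DecidablePred Q]

theorem sum_perm_sum_strictMono_comp (hQinj : ∀ f, Q f → Injective f)
    (hQperm : ∀ f (σ : Equiv.Perm (Fin s)), Q (f ∘ σ) ↔ Q f) (F : (Fin s → κ) → β) :
    ∑ σ : Equiv.Perm (Fin s), ∑ g with Q g ∧ StrictMono g, F (g ∘ σ) = ∑ f with Q f, F f := by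
  rw [← sum_product']
  refine sum_nbij' (fun p => p.2 ∘ p.1) (fun f => ((Tuple.sort f)⁻¹, f ∘ Tuple.sort f))
    ?_ ?_ ?_ ?_ fun _ _ => rfl
  · simp only [mem_product, mem_filter, mem_univ, true_and]
    exact fun p hp => (hQperm _ _).2 hp.1
  · intro f hf
    simp only [mem_product, mem_filter, mem_univ, true_and] at hf ⊢
    exact ⟨(hQperm _ _).2 hf, (Tuple.monotone_sort f).strictMono_of_injective
      ((hQinj f hf).comp (Tuple.sort f).injective)⟩
  · rintro ⟨σ, g⟩ hg
    simp only [mem_product, mem_filter, mem_univ, true_and] at hg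
    have hsorted : g ∘ σ ∘ Tuple.sort (g ∘ σ) = g := by
      have := Tuple.comp_perm_comp_sort_eq_comp_sort (σ := σ) (f := g)
      rwa [Tuple.sort_eq_refl_iff_monotone.2 hg.2.monotone, Equiv.coe_refl, comp_id] at this
    have hσ : σ * Tuple.sort (g ∘ σ) = 1 := Equiv.ext fun x => hg.2.injective (congrFun hsorted x)
    exact Prod.ext (eq_inv_of_mul_eq_one_left hσ).symm hsorted
  · intro f _
    ext
    simp

theorem sum_filter_eq_factorial_nsmul_sum_filter_strictMono (hQinj : ∀ f, Q f → Injective f)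
    (hQperm : ∀ f (σ : Equiv.Perm (Fin s)), Q (f ∘ σ) ↔ Q f) {F : (Fin s → κ) → β}
    (hF : ∀ f (σ : Equiv.Perm (Fin s)), F (f ∘ σ) = F f) :
    ∑ f with Q f, F f = s.factorial • ∑ g with Q g ∧ StrictMono g, F g := by
  simp_rw [← sum_perm_sum_strictMono_comp hQinj hQperm F, hF, sum_const, card_univ,
    Fintype.card_perm, Fintype.card_fin]

end

theorem sum_filter_prod_le_of_card_fiber_le {ι κ : Type*} [Fintype ι] [DecidableEq ι]
    [Fintype κ] {w : κ → ℝ} (hw : ∀ x, 0 ≤ w x) {M : ℝ} (hM : 0 ≤ M) (hwM : ∀ x, w x ≤ M)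
    (j : ι) {P : (ι → κ) → Prop} [DecidablePred P] {c : ℕ}
    (hP : ∀ f, #{x | P (update f j x)} ≤ c) :
    ∑ f with P f, ∏ i, w (f i) ≤ c * M * (∑ x, w x) ^ (Fintype.card ι - 1) := by
  obtain hκ | ⟨⟨x₀⟩⟩ := isEmpty_or_nonempty κ
  · have : IsEmpty (ι → κ) := ⟨fun f => hκ.elim (f j)⟩
    simp only [univ_eq_empty, filter_empty, sum_empty]
    positivity
  let e := (Equiv.funSplitAt j κ).symm
  have he : ∀ x r, e (x, r) = update (e (x₀, r)) j x := by
    intro x r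
    ext i
    by_cases hi : i = j
    · subst hi; simp [e]
    · simp [e, hi]
  have hprod : ∀ x r, ∏ i, w (e (x, r) i) = w x * ∏ i, w (r i) := by
    intro x r
    rw [Fintype.prod_eq_mul_prod_subtype_ne _ j]
    congr 1
    · simp [e]
    · exact prod_congr rfl fun i _ => by simp [e, i.2]
  have hfiber : ∀ r, ∑ x with P (e (x, r)), w x ≤ c * M := by
    intro r
    calc ∑ x with P (e (x, r)), w x ≤ #{x | P (e (x, r))} • M :=
          sum_le_card_nsmul _ _ _ fun x _ => hwM x
      _ ≤ c * M := by
          rw [nsmul_eq_mul]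
          gcongr
          rw [filter_congr fun x _ => by rw [he x r]]
          exact_mod_cast hP _
  calc ∑ f with P f, ∏ i, w (f i)
      = ∑ r : {i // i ≠ j} → κ, (∑ x with P (e (x, r)), w x) * ∏ i, w (r i) := by
        rw [sum_filter, ← e.sum_comp, Fintype.sum_prod_type_right]
        simp_rw [sum_filter, sum_mul, ite_mul, zero_mul, hprod]
    _ ≤ ∑ r : {i // i ≠ j} → κ, c * M * ∏ i, w (r i) :=
        sum_le_sum fun r _ =>
          mul_le_mul_of_nonneg_right (hfiber r) (prod_nonneg fun i _ => hw _)
    _ = c * M * (∑ x, w x) ^ (Fintype.card ι - 1) := by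
        rw [← mul_sum, ← Fintype.prod_sum, prod_const, card_univ, Fintype.card_subtype_compl,
          Fintype.card_subtype_eq]

theorem sum_filter_le_sum_sum_filter {ι κ β : Type*} [AddCommMonoid β] [PartialOrder β]
    [IsOrderedAddMonoid β] {s : Finset ι} {I : Finset κ} {Q : ι → Prop} [DecidablePred Q]
    {P : κ → ι → Prop} [∀ p, DecidablePred (P p)] (hQ : ∀ x ∈ s, Q x → ∃ p ∈ I, P p x)
    {F : ι → β} (hF : ∀ x ∈ s, 0 ≤ F x) :
    ∑ x ∈ s with Q x, F x ≤ ∑ p ∈ I, ∑ x ∈ s with P p x, F x := by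
  have hite : ∀ x ∈ s, ∀ p, 0 ≤ if P p x then F x else 0 := fun x hx p => by
    split_ifs
    exacts [hF x hx, le_rfl]
  calc ∑ x ∈ s with Q x, F x
      ≤ ∑ x ∈ s with Q x, ∑ p ∈ I, if P p x then F x else 0 := by
        refine sum_le_sum fun x hx => ?_
        obtain ⟨hxs, hQx⟩ := mem_filter.1 hx
        obtain ⟨p, hp, hPp⟩ := hQ x hxs hQx
        calc F x = if P p x then F x else 0 := (if_pos hPp).symm
          _ ≤ _ := single_le_sum (fun p _ => hite x hxs p) hp
    _ ≤ ∑ x ∈ s, ∑ p ∈ I, if P p x then F x else 0 :=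
        sum_le_sum_of_subset_of_nonneg (filter_subset _ _) fun x hx _ =>
          sum_nonneg fun p _ => hite x hx p
    _ = ∑ p ∈ I, ∑ x ∈ s with P p x, F x := by
        rw [sum_comm]
        simp_rw [sum_filter]

theorem card_filter_near_le_three {κ : Type*} [Fintype κ] {φ : κ → ℕ} (hφ : Injective φ)
    (n : ℕ) : #{x | n < φ x + 2 ∧ φ x < n + 2} ≤ 3 := by
  calc #{x | n < φ x + 2 ∧ φ x < n + 2} ≤ #(Icc (n - 1) (n + 1)) :=
        card_le_card_of_injOn φ (fun x hx => by
          simp only [coe_filter, mem_univ, true_and, Set.mem_ofPred_eq, coe_Icc, Set.mem_Icc,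
            tsub_le_iff_right] at hx ⊢
          omega) hφ.injOn
    _ ≤ 3 := by rw [Nat.card_Icc]; omega

theorem sum_filter_not_isTwoSeparated_le {ι : Type*} [Fintype ι] [DecidableEq ι]
    {T : Finset ℕ} {w : ℕ → ℝ} (hw : ∀ x, 0 ≤ w x) {M : ℝ} (hwM : ∀ x, w x ≤ M) :
    ∑ f : ι → T with ¬IsTwoSeparated (Subtype.val ∘ f), ∏ k, w (f k) ≤
      3 * Fintype.card ι ^ 2 * M * (∑ x ∈ T, w x) ^ (Fintype.card ι - 1) := by
  calc ∑ f : ι → T with ¬IsTwoSeparated (Subtype.val ∘ f), ∏ k, w (f k)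
      ≤ ∑ p : ι × ι, ∑ f : ι → T with p.1 ≠ p.2 ∧ (f p.1 : ℕ) < f p.2 + 2 ∧
          (f p.2 : ℕ) < f p.1 + 2, ∏ k, w (f k) := by
        refine sum_filter_le_sum_sum_filter (fun f _ hf => ?_) fun f _ =>
          prod_nonneg fun k _ => hw _
        obtain ⟨i, j, hij, hnear⟩ := IsTwoSeparated.not_iff.1 hf
        exact ⟨(j, i), mem_univ _, hij.symm, hnear⟩
    _ ≤ ∑ _p : ι × ι, 3 * M * (∑ x ∈ T, w x) ^ (Fintype.card ι - 1) := by
        refine sum_le_sum fun ⟨i, j⟩ _ => ?_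
        rw [← sum_coe_sort T w]
        refine sum_filter_prod_le_of_card_fiber_le (w := fun x : T => w x) (fun x => hw x)
          ((hw 0).trans (hwM 0)) (fun x => hwM x) j fun f => ?_
        by_cases hij : i = j
        · simp [hij]
        · simp only [update_of_ne hij, update_self, ne_eq, hij, not_false_eq_true, true_and]
          exact card_filter_near_le_three Subtype.val_injective _
    _ = 3 * Fintype.card ι ^ 2 * M * (∑ x ∈ T, w x) ^ (Fintype.card ι - 1) := by
        rw [sum_const, card_univ, Fintype.card_prod, nsmul_eq_mul]
        push_cast
        ring

theorem tsum_subtype_prod_eq_sum_filter {ι α R : Type*} [Fintype ι] [DecidableEq ι]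
    [CommSemiring R] [TopologicalSpace R] {a : α → R} {T : Finset α} (haT : support a ⊆ T)
    (C : (ι → α) → Prop) [DecidablePred C] :
    ∑' ℓ : {ℓ : ι → α // C ℓ}, ∏ k, a (ℓ.1 k) =
      ∑ f : ι → T with C (Subtype.val ∘ f), ∏ k, a (f k) := by
  let g : {f : ι → T // C (Subtype.val ∘ f)} → {ℓ : ι → α // C ℓ} := fun f => ⟨_, f.2⟩
  have hg : Injective g := fun f f' h =>
    Subtype.ext (funext fun k => Subtype.ext (congrFun (congrArg Subtype.val h) k))
  have hsupp : support (fun ℓ : {ℓ : ι → α // C ℓ} => ∏ k, a (ℓ.1 k)) ⊆ Set.range g := by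
    intro ℓ hℓ
    have hmem : ∀ k, ℓ.1 k ∈ T := fun k => haT fun h0 => hℓ (prod_eq_zero (mem_univ k) h0)
    exact ⟨⟨fun k => ⟨ℓ.1 k, hmem k⟩, ℓ.2⟩, rfl⟩
  rw [← hg.tsum_eq hsupp, tsum_fintype]
  exact (sum_subtype _ (fun f => by simp) fun f : ι → T => ∏ k, a (f k)).symm

/-- For a finitely supported nonnegative family `(a_ℓ)_{ℓ≥1}` with sum `A` and maximum
`M`, and `W_s` the sum of products `a_{ℓ₁}⋯a_{ℓ_s}` over tuples with consecutive gaps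
at least `2`, one has `0 ≤ A^s − s!·W_s ≤ 3·s²·M·A^{s−1}`. -/
theorem separated_tuple_sum_bound (a : ℕ → ℝ) (ha : ∀ ℓ, 0 ≤ a ℓ)
    (hfin : (Function.support a).Finite)
    (s : ℕ)
    (A : ℝ) (hA : A = ∑' ℓ, a ℓ)
    (M : ℝ) (hM : IsGreatest (Set.range a) M)
    (W : ℝ)
    (hW : W = ∑' ℓ : {ℓ : Fin s → ℕ //
        ∀ k (h : k + 1 < s), (ℓ ⟨k, by omega⟩ : ℕ) + 2 ≤ ℓ ⟨k + 1, h⟩},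
      ∏ k : Fin s, a (ℓ.1 k)) :
    0 ≤ A ^ s - (Nat.factorial s : ℝ) * W ∧
    A ^ s - (Nat.factorial s : ℝ) * W ≤ 3 * (s : ℝ) ^ 2 * M * A ^ (s - 1) := by
  classical
  set T := hfin.toFinset
  have haT : support a ⊆ T := fun ℓ hℓ => hfin.mem_toFinset.2 hℓ
  have hA' : A = ∑ ℓ ∈ T, a ℓ := hA.trans (tsum_eq_sum' haT)
  have hpow : A ^ s = ∑ f : Fin s → T, ∏ k, a (f k) := by
    rw [hA', ← sum_coe_sort, ← Fin.prod_const, Fintype.prod_sum]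
  have hsep : s.factorial * W =
      ∑ f : Fin s → T with IsTwoSeparated (Subtype.val ∘ f), ∏ k, a (f k) := by
    rw [hW, tsum_subtype_prod_eq_sum_filter haT,
      sum_filter_eq_factorial_nsmul_sum_filter_strictMono
        (Q := fun f : Fin s → T => IsTwoSeparated (Subtype.val ∘ f))
        (fun f hf => hf.injective.of_comp)
        (fun f σ => IsTwoSeparated.comp_equiv_iff (ℓ := Subtype.val ∘ f) σ)
        (fun f σ => Equiv.prod_comp σ fun k => a (f k)), nsmul_eq_mul]
    simp_rw [consecutive_add_two_le_iff_isTwoSeparated_and_strictMono]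
    -- `StrictMono (Subtype.val ∘ f)` and `StrictMono f` are the same proposition.
    rfl
  have herr : A ^ s - s.factorial * W =
      ∑ f : Fin s → T with ¬IsTwoSeparated (Subtype.val ∘ f), ∏ k, a (f k) := by
    rw [hpow, hsep,
      ← sum_filter_add_sum_filter_not univ fun f => IsTwoSeparated (Subtype.val ∘ f)]
    ring
  refine ⟨herr ▸ sum_nonneg fun f _ => prod_nonneg fun k _ => ha _, ?_⟩
  have hbound :=
    sum_filter_not_isTwoSeparated_le (ι := Fin s) (T := T) ha fun ℓ => hM.2 ⟨ℓ, rfl⟩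
  rwa [← hA', Fintype.card_fin, ← herr] at hbound
end
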